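/- arXiv:2305.17070 — 6 statements merged into one kernel-verified Lean document; each statement's English description precedes it below -/
import Mathlib

section
/- Let a₁, …, a_r > 0, let P := {Y ∈ ℝ^r : 0 ≤ β_i(Y) ≤ a_i for all i} be the corresponding parallelotope, and set δ_P := Σ_i N_i a_i (equivalently, δ_P = sup_{Y ∈ P} 2ρ(Y)). Then there exist constants C > 0, C' ≥ 0 and a real number δ⁻ < δ_P such that for every t ≥ 1 one has | ∫_{tP} ∏_{j=1}^{N} sinh(α_j(Y))^{m_j} dY − C e^{δ_P t} | ≤ C' e^{δ⁻ t}. -/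
/-!
Writing `sinh x = (eˣ - e⁻ˣ)/2` expands the integrand into a finite combination of exponentials
`exp (φ_k Y)` of the linear forms `φ_k = Σⱼ (2kⱼ - mⱼ) αⱼ`, `0 ≤ kⱼ ≤ mⱼ`. In the coordinates
`uᵢ = βᵢ Y` (a linear change of variables, hence a constant Jacobian) the domain `tP` is the box
`∏ [0, t aᵢ]`, so each term is a product of one-variable integrals `∫₀^{t aᵢ} exp (ξᵢ x) dx`,
where `ξ` are the `β`-coordinates of `φ_k`.

The term `k = m` has `φ_m = 2ρ`, i.e. `ξ = N`, and contributes
`∏ᵢ (e^{Nᵢ aᵢ t} - 1)/Nᵢ = e^{δ_P t}/∏ Nᵢ + O(e^{(δ_P - min Nᵢ aᵢ) t})`.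
For `k ≠ m` some `kⱼ < mⱼ`, and `αⱼ ≠ 0` has a positive `β`-coordinate, so `ξᵢ ≤ Nᵢ` for all `i`
with strict inequality somewhere; bounding each factor by `t aᵢ e^{max(ξᵢ, 0) aᵢ t}` shows that
this term is `O(tʳ e^{ρ t})` with `ρ = Σ max(ξᵢ, 0) aᵢ < δ_P`.
-/

open MeasureTheory Real Set Filter Asymptotics Module

theorem integral_Icc_exp_mul {c L : ℝ} (hc : c ≠ 0) (hL : 0 ≤ L) :
    ∫ x in Icc 0 L, exp (c * x) = (exp (c * L) - 1) / c := by
  rw [integral_Icc_eq_integral_Ioc, ← intervalIntegral.integral_of_le hL,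
    intervalIntegral.integral_comp_mul_left (fun x => exp x) hc, integral_exp]
  simp [div_eq_inv_mul]

theorem abs_integral_Icc_exp_mul_le (c : ℝ) {L : ℝ} (hL : 0 ≤ L) :
    |∫ x in Icc 0 L, exp (c * x)| ≤ L * exp (max c 0 * L) := by
  have hbound : ∀ x ∈ Icc 0 L, ‖exp (c * x)‖ ≤ exp (max c 0 * L) := fun x hx => by
    rw [norm_of_nonneg (exp_pos _).le, exp_le_exp]
    exact (mul_le_mul_of_nonneg_right (le_max_left c 0) hx.1).trans
      (mul_le_mul_of_nonneg_left hx.2 (le_max_right c 0))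
  have := norm_setIntegral_le_of_norm_le_const (μ := volume) measure_Icc_lt_top hbound
  rwa [Real.volume_real_Icc_of_le hL, sub_zero, mul_comm, Real.norm_eq_abs] at this

theorem Module.Basis.exists_continuousLinearEquiv_apply_eq {ι E : Type*} [Fintype ι]
    [NormedAddCommGroup E] [NormedSpace ℝ E] [FiniteDimensional ℝ E]
    (β : Basis ι ℝ (Dual ℝ E)) : ∃ e : E ≃L[ℝ] (ι → ℝ), ∀ Y, e Y = fun i => β i Y := by
  classical
  exact ⟨(β.dualBasis.map (evalEquiv ℝ E).symm).equivFun.toContinuousLinearEquiv,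
    fun Y => by ext i; simp⟩

theorem ContinuousLinearEquiv.exists_pos_setIntegral_comp_eq {E F : Type*}
    [NormedAddCommGroup E] [NormedSpace ℝ E] [FiniteDimensional ℝ E] [MeasurableSpace E]
    [BorelSpace E] [NormedAddCommGroup F] [NormedSpace ℝ F] [FiniteDimensional ℝ F]
    [MeasurableSpace F] [BorelSpace F] (e : E ≃L[ℝ] F) (μ : Measure E) [μ.IsAddHaarMeasure]
    (ν : Measure F) [ν.IsAddHaarMeasure] :
    ∃ c > (0 : ℝ), ∀ (s : Set F) (g : F → ℝ),
      ∫ x in e ⁻¹' s, g (e x) ∂μ = c * ∫ y in s, g y ∂ν := by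
  obtain ⟨c, hc, hmap⟩ : ∃ c : NNReal, 0 < c ∧ μ.map e = c • ν :=
    ⟨_, Measure.addHaarScalarFactor_pos_of_isAddHaarMeasure _ _,
      Measure.isAddLeftInvariant_eq_smul _ _⟩
  refine ⟨c, hc, fun s g => ?_⟩
  have he : MeasurableEmbedding e := e.toHomeomorph.measurableEmbedding
  rw [← he.setIntegral_map, hmap, Measure.restrict_smul, integral_smul_nnreal_measure,
    NNReal.smul_def, smul_eq_mul]

section Parallelotope

variable {ι E : Type*} [NormedAddCommGroup E] [NormedSpace ℝ E]

def parallelotope (β : Basis ι ℝ (Dual ℝ E)) (L : ι → ℝ) : Set E :=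
  {Y | ∀ i, 0 ≤ β i Y ∧ β i Y ≤ L i}

theorem parallelotope_eq_preimage {β : Basis ι ℝ (Dual ℝ E)} {e : E ≃L[ℝ] (ι → ℝ)}
    (he : ∀ Y, e Y = fun i => β i Y) (L : ι → ℝ) :
    parallelotope β L = e ⁻¹' univ.pi fun i => Icc 0 (L i) := by
  ext Y
  simp only [parallelotope, mem_ofPred_eq, mem_preimage, he, mem_univ_pi, mem_Icc]

variable [Fintype ι]

theorem isCompact_parallelotope [FiniteDimensional ℝ E] (β : Basis ι ℝ (Dual ℝ E))
    (L : ι → ℝ) : IsCompact (parallelotope β L) := by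
  obtain ⟨e, he⟩ := β.exists_continuousLinearEquiv_apply_eq
  rw [parallelotope_eq_preimage he]
  exact e.toHomeomorph.isCompact_preimage.2 (isCompact_univ_pi fun _ => isCompact_Icc)

noncomputable def expBoxIntegral (ξ L : ι → ℝ) : ℝ :=
  ∏ i, ∫ x in Icc 0 (L i), exp (ξ i * x)

theorem integral_box_exp_sum (ξ L : ι → ℝ) :
    ∫ u in univ.pi (fun i => Icc 0 (L i)), exp (∑ i, ξ i * u i) = expBoxIntegral ξ L := by
  rw [volume_pi, Measure.restrict_pi_pi]
  simp_rw [exp_sum]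
  exact integral_fintype_prod_eq_prod fun i x => exp (ξ i * x)

theorem exists_integral_exp_parallelotope [FiniteDimensional ℝ E] [MeasurableSpace E]
    [BorelSpace E] (β : Basis ι ℝ (Dual ℝ E)) (μ : Measure E) [μ.IsAddHaarMeasure] :
    ∃ c > (0 : ℝ), ∀ (φ : Dual ℝ E) (L : ι → ℝ),
      ∫ Y in parallelotope β L, exp (φ Y) ∂μ = c * expBoxIntegral (β.repr φ) L := by
  obtain ⟨e, he⟩ := β.exists_continuousLinearEquiv_apply_eq
  obtain ⟨c, hc, hce⟩ := e.exists_pos_setIntegral_comp_eq μ volume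
  refine ⟨c, hc, fun φ L => ?_⟩
  have hφ : ∀ Y, φ Y = ∑ i, β.repr φ i * e Y i := fun Y => by
    simpa only [he, LinearMap.sum_apply, LinearMap.smul_apply, smul_eq_mul]
      using congrArg (fun ψ : Dual ℝ E => ψ Y) (β.sum_repr φ).symm
  simp_rw [parallelotope_eq_preimage he, hφ, ← integral_box_exp_sum]
  exact hce _ fun u => exp (∑ i, β.repr φ i * u i)

end Parallelotope

-- `n - k` is truncated subtraction; only `k ≤ n` is ever used.
noncomputable def sinhPowCoeff (n k : ℕ) : ℝ :=
  (-1) ^ (n - k) * n.choose k / 2 ^ n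

theorem sinhPowCoeff_self (n : ℕ) : sinhPowCoeff n n = (2 ^ n)⁻¹ := by
  simp [sinhPowCoeff]

theorem sinh_pow_eq_sum (x : ℝ) (n : ℕ) :
    sinh x ^ n = ∑ k ∈ Finset.range (n + 1), sinhPowCoeff n k * exp ((2 * k - n) * x) := by
  rw [sinh_eq, div_pow, sub_eq_add_neg, add_pow, Finset.sum_div]
  refine Finset.sum_congr rfl fun k hk => ?_
  have hkn : k ≤ n := Nat.lt_succ_iff.mp (Finset.mem_range.mp hk)
  rw [neg_pow, ← exp_nat_mul, ← exp_nat_mul, sinhPowCoeff, Nat.cast_sub hkn,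
    show (2 * k - n : ℝ) * x = k * x + (n - k) * -x by ring, exp_add]
  ring

theorem prod_sinh_pow_eq_sum {κ : Type*} [Fintype κ] [DecidableEq κ] (x : κ → ℝ)
    (m : κ → ℕ) :
    ∏ j, sinh (x j) ^ m j = ∑ k ∈ Fintype.piFinset fun j => Finset.range (m j + 1),
      (∏ j, sinhPowCoeff (m j) (k j)) * exp (∑ j, (2 * k j - m j : ℝ) * x j) := by
  simp_rw [sinh_pow_eq_sum, Finset.prod_univ_sum, exp_sum, Finset.prod_mul_distrib]

theorem exists_integral_prod_sinh_pow_parallelotope {ι κ E : Type*} [Fintype ι] [Fintype κ]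
    [DecidableEq κ] [NormedAddCommGroup E] [NormedSpace ℝ E] [FiniteDimensional ℝ E]
    [MeasurableSpace E] [BorelSpace E] (β : Basis ι ℝ (Dual ℝ E)) (μ : Measure E)
    [μ.IsAddHaarMeasure] (α : κ → Dual ℝ E) (m : κ → ℕ) :
    ∃ c > (0 : ℝ), ∀ L : ι → ℝ,
      ∫ Y in parallelotope β L, ∏ j, sinh (α j Y) ^ m j ∂μ =
        c * ∑ k ∈ Fintype.piFinset fun j => Finset.range (m j + 1),
          (∏ j, sinhPowCoeff (m j) (k j)) *
            expBoxIntegral (fun i => ∑ j, (2 * k j - m j : ℝ) * β.repr (α j) i) L := by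
  obtain ⟨c, hc, hexp⟩ := exists_integral_exp_parallelotope β μ
  refine ⟨c, hc, fun L => ?_⟩
  have hφ : ∀ (k : κ → ℕ) Y,
      ∑ j, (2 * k j - m j : ℝ) * α j Y = (∑ j, (2 * k j - m j : ℝ) • α j) Y :=
    fun k Y => by simp
  simp_rw [prod_sinh_pow_eq_sum, hφ]
  rw [integral_finsetSum, Finset.mul_sum]
  · refine Finset.sum_congr rfl fun k _ => ?_
    rw [integral_const_mul, hexp, mul_left_comm]
    congr 3
    ext i
    simp
  · exact fun k _ => (continuous_const.mul (continuous_exp.comp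
      (LinearMap.continuous_of_finiteDimensional _))).continuousOn.integrableOn_compact
        (isCompact_parallelotope β L)

def HasExpRateBelow (δ : ℝ) (f : ℝ → ℝ) : Prop :=
  ∃ γ < δ, f =O[𝓟 (Ici 0)] fun t => exp (γ * t)

theorem exp_mul_isBigO_exp_mul {γ γ' : ℝ} (h : γ ≤ γ') :
    (fun t => exp (γ * t)) =O[𝓟 (Ici 0)] fun t => exp (γ' * t) :=
  isBigO_principal.2 ⟨1, fun t (ht : 0 ≤ t) => by
    simpa [abs_of_pos (exp_pos _)] using mul_le_mul_of_nonneg_right h ht⟩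

theorem pow_mul_exp_mul_isBigO_exp_mul {ρ γ : ℝ} (h : ρ < γ) (n : ℕ) :
    (fun t => t ^ n * exp (ρ * t)) =O[𝓟 (Ici 0)] fun t => exp (γ * t) := by
  set ε := γ - ρ
  have hε : 0 < ε := sub_pos.2 h
  refine isBigO_principal.2 ⟨n.factorial / ε ^ n, fun t (ht : 0 ≤ t) => ?_⟩
  have hpow : t ^ n ≤ n.factorial / ε ^ n * exp (ε * t) := by
    have := pow_div_factorial_le_exp (ε * t) (by positivity) n
    rw [mul_pow, div_le_iff₀ (by positivity)] at this
    rw [div_mul_eq_mul_div, le_div_iff₀ (by positivity)]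
    linarith
  rw [norm_of_nonneg (by positivity), norm_of_nonneg (exp_pos _).le,
    show γ * t = ε * t + ρ * t by ring, exp_add, ← mul_assoc]
  exact mul_le_mul_of_nonneg_right hpow (exp_pos _).le

namespace HasExpRateBelow

variable {δ : ℝ} {f g : ℝ → ℝ}

theorem of_isBigO {ρ : ℝ} (hρ : ρ < δ) {n : ℕ}
    (h : f =O[𝓟 (Ici 0)] fun t => t ^ n * exp (ρ * t)) : HasExpRateBelow δ f :=
  ⟨(ρ + δ) / 2, by linarith, h.trans (pow_mul_exp_mul_isBigO_exp_mul (by linarith) n)⟩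

theorem congr (hf : HasExpRateBelow δ f) (hfg : ∀ t ≥ 0, f t = g t) : HasExpRateBelow δ g :=
  let ⟨γ, hγ, h⟩ := hf
  ⟨γ, hγ, h.congr' (eventually_principal.2 hfg) EventuallyEq.rfl⟩

theorem add (hf : HasExpRateBelow δ f) (hg : HasExpRateBelow δ g) :
    HasExpRateBelow δ (f + g) :=
  let ⟨γ, hγ, hf⟩ := hf
  let ⟨γ', hγ', hg⟩ := hg
  ⟨max γ γ', max_lt hγ hγ', (hf.trans (exp_mul_isBigO_exp_mul (le_max_left γ γ'))).add
    (hg.trans (exp_mul_isBigO_exp_mul (le_max_right γ γ')))⟩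

theorem const_mul (hf : HasExpRateBelow δ f) (c : ℝ) : HasExpRateBelow δ fun t => c * f t :=
  let ⟨γ, hγ, h⟩ := hf
  ⟨γ, hγ, h.const_mul_left c⟩

theorem sum {κ : Type*} {s : Finset κ} {f : κ → ℝ → ℝ}
    (h : ∀ k ∈ s, HasExpRateBelow δ (f k)) : HasExpRateBelow δ fun t => ∑ k ∈ s, f k t := by
  classical
  induction s using Finset.induction_on with
  | empty => exact ⟨δ - 1, by linarith, by simpa using isBigO_zero _ _⟩
  | insert k s hk ih =>
    simp_rw [Finset.sum_insert hk]
    exact (h k (s.mem_insert_self k)).add (ih fun k' hk' => h k' (Finset.mem_insert_of_mem hk'))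

theorem exists_abs_le (hf : HasExpRateBelow δ f) :
    ∃ C ≥ (0 : ℝ), ∃ γ < δ, ∀ t ≥ 0, |f t| ≤ C * exp (γ * t) := by
  obtain ⟨γ, hγ, h⟩ := hf
  obtain ⟨C, hC, hCf⟩ := h.exists_nonneg
  refine ⟨C, hC, γ, hγ, fun t ht => ?_⟩
  simpa [abs_of_pos (exp_pos _)] using (isBigOWith_principal.1 hCf) t ht

end HasExpRateBelow

theorem hasExpRateBelow_exp_mul {γ δ : ℝ} (h : γ < δ) :
    HasExpRateBelow δ fun t => exp (γ * t) :=
  ⟨γ, h, isBigO_refl _ _⟩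

theorem hasExpRateBelow_prod_exp_sub_one_sub {ι : Type*} [Fintype ι] {b : ι → ℝ}
    (hb : ∀ i, 0 < b i) :
    HasExpRateBelow (∑ i, b i) fun t => ∏ i, (exp (b i * t) - 1) - exp ((∑ i, b i) * t) := by
  classical
  have hexpand : ∀ t, ∏ i, (exp (b i * t) - 1) - exp ((∑ i, b i) * t) =
      ∑ T ∈ Finset.univ.powerset.erase ∅,
        (-1) ^ T.card * exp ((∑ i ∈ Finset.univ \ T, b i) * t) := by
    intro t
    rw [Finset.prod_sub, ← Finset.add_sum_erase _ _ (Finset.empty_mem_powerset _)]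
    simp only [Finset.prod_const_one, mul_one, Finset.card_empty, pow_zero, one_mul,
      Finset.sdiff_empty, Finset.sum_mul, ← exp_sum, add_sub_cancel_left]
  refine (HasExpRateBelow.sum fun T hT => (hasExpRateBelow_exp_mul ?_).const_mul _).congr
    fun t _ => (hexpand t).symm
  obtain ⟨i, hi⟩ := Finset.nonempty_iff_ne_empty.2 (Finset.ne_of_mem_erase hT)
  exact Finset.sum_lt_sum_of_subset Finset.sdiff_subset (Finset.mem_univ i)
    (fun h => (Finset.mem_sdiff.1 h).2 hi) (hb i) fun j _ _ => (hb j).le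

theorem hasExpRateBelow_expBoxIntegral_sub {ι : Type*} [Fintype ι] {ξ a : ι → ℝ}
    (hξ : ∀ i, 0 < ξ i) (ha : ∀ i, 0 < a i) :
    HasExpRateBelow (∑ i, ξ i * a i) fun t =>
      expBoxIntegral ξ (fun i => t * a i) - (∏ i, (ξ i)⁻¹) * exp ((∑ i, ξ i * a i) * t) := by
  refine ((hasExpRateBelow_prod_exp_sub_one_sub fun i => mul_pos (hξ i) (ha i)).const_mul
    (∏ i, (ξ i)⁻¹)).congr fun t ht => ?_
  have hfactor : ∀ i, ∫ x in Icc 0 (t * a i), exp (ξ i * x) =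
      (ξ i)⁻¹ * (exp (ξ i * a i * t) - 1) := fun i => by
    rw [integral_Icc_exp_mul (hξ i).ne' (mul_nonneg ht (ha i).le), mul_comm t, ← mul_assoc,
      div_eq_inv_mul]
  simp only [expBoxIntegral, hfactor, Finset.prod_mul_distrib]
  ring

theorem hasExpRateBelow_expBoxIntegral {ι : Type*} [Fintype ι] {ξ a : ι → ℝ} {δ : ℝ}
    (ha : ∀ i, 0 ≤ a i) (h : ∑ i, max (ξ i) 0 * a i < δ) :
    HasExpRateBelow δ fun t => expBoxIntegral ξ (fun i => t * a i) := by
  refine HasExpRateBelow.of_isBigO h (n := Fintype.card ι) <|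
    isBigO_principal.2 ⟨∏ i, a i, fun t (ht : 0 ≤ t) => ?_⟩
  rw [norm_eq_abs, norm_eq_abs, expBoxIntegral, Finset.abs_prod,
    abs_of_nonneg (by positivity : 0 ≤ t ^ _ * exp ((∑ i, max (ξ i) 0 * a i) * t))]
  calc ∏ i, |∫ x in Icc 0 (t * a i), exp (ξ i * x)|
      ≤ ∏ i, t * a i * exp (max (ξ i) 0 * (t * a i)) :=
        Finset.prod_le_prod (fun i _ => abs_nonneg _)
          fun i _ => abs_integral_Icc_exp_mul_le _ (mul_nonneg ht (ha i))
    _ = (∏ i, a i) * (t ^ Fintype.card ι * exp ((∑ i, max (ξ i) 0 * a i) * t)) := by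
        simp only [Finset.prod_mul_distrib, Finset.prod_const, Finset.card_univ, Finset.sum_mul,
          exp_sum]
        ring_nf

theorem hasExpRateBelow_sum_expBoxIntegral_sub {κ ι : Type*} [Fintype ι] [DecidableEq κ]
    {K : Finset κ} {k₀ : κ} (hk₀ : k₀ ∈ K) {w : κ → ℝ} {ξ : κ → ι → ℝ} {N a : ι → ℝ}
    (hN : ∀ i, 0 < N i) (ha : ∀ i, 0 < a i) (hξ₀ : ξ k₀ = N)
    (hlower : ∀ k ∈ K.erase k₀, ∑ i, max (ξ k i) 0 * a i < ∑ i, N i * a i) :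
    HasExpRateBelow (∑ i, N i * a i) fun t =>
      ∑ k ∈ K, w k * expBoxIntegral (ξ k) (fun i => t * a i) -
        w k₀ * (∏ i, (N i)⁻¹) * exp ((∑ i, N i * a i) * t) := by
  refine (((hasExpRateBelow_expBoxIntegral_sub hN ha).const_mul (w k₀)).add
    (HasExpRateBelow.sum fun k hk => (hasExpRateBelow_expBoxIntegral (fun i => (ha i).le)
      (hlower k hk)).const_mul (w k))).congr fun t _ => ?_
  rw [← Finset.add_sum_erase _ _ hk₀, hξ₀, Pi.add_apply]
  ring

theorem lt_of_mem_piFinset_range_erase {κ : Type*} [Fintype κ] [DecidableEq κ] {k m : κ → ℕ}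
    (hk : k ∈ (Fintype.piFinset fun j => Finset.range (m j + 1)).erase m) : k < m := by
  obtain ⟨hkm, hkK⟩ := Finset.mem_erase.1 hk
  exact lt_of_le_of_ne (fun j => Nat.lt_succ_iff.1 (Finset.mem_range.1
    (Fintype.mem_piFinset.1 hkK j))) hkm

theorem sum_max_mul_lt_sum_mul {κ ι : Type*} [Fintype κ] [Fintype ι] {c : κ → ι → ℝ}
    (hc : ∀ j i, 0 ≤ c j i) (hc0 : ∀ j, c j ≠ 0) {a : ι → ℝ} (ha : ∀ i, 0 < a i)
    {k m : κ → ℕ} (hkm : k < m) :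
    ∑ i, max (∑ j, (2 * k j - m j : ℝ) * c j i) 0 * a i <
      ∑ i, (∑ j, (m j : ℝ) * c j i) * a i := by
  obtain ⟨hle, j₀, hj₀⟩ := Pi.lt_def.1 hkm
  obtain ⟨i₀, hi₀⟩ := Function.ne_iff.1 (hc0 j₀)
  have hci₀ : 0 < c j₀ i₀ := (hc j₀ i₀).lt_of_ne' hi₀
  have hterm : ∀ j i, (2 * k j - m j : ℝ) * c j i ≤ m j * c j i := fun j i =>
    mul_le_mul_of_nonneg_right (by linarith [(Nat.cast_le (α := ℝ)).2 (hle j)]) (hc j i)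
  have hterm₀ : (2 * k j₀ - m j₀ : ℝ) * c j₀ i₀ < m j₀ * c j₀ i₀ :=
    mul_lt_mul_of_pos_right (by linarith [(Nat.cast_lt (α := ℝ)).2 hj₀]) hci₀
  have hsum_nonneg : ∀ i, 0 ≤ ∑ j, (m j : ℝ) * c j i := fun i =>
    Finset.sum_nonneg fun j _ => mul_nonneg (Nat.cast_nonneg _) (hc j i)
  have hsum_pos : 0 < ∑ j, (m j : ℝ) * c j i₀ :=
    (mul_pos (Nat.cast_pos.2 ((Nat.zero_le _).trans_lt hj₀)) hci₀).trans_le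
      (Finset.single_le_sum (fun j _ => mul_nonneg (Nat.cast_nonneg _) (hc j i₀))
        (Finset.mem_univ j₀))
  refine Finset.sum_lt_sum (fun i _ => mul_le_mul_of_nonneg_right ?_ (ha i).le)
    ⟨i₀, Finset.mem_univ _, mul_lt_mul_of_pos_right (max_lt ?_ hsum_pos) (ha i₀)⟩
  · exact max_le (Finset.sum_le_sum fun j _ => hterm j i) (hsum_nonneg i)
  · exact Finset.sum_lt_sum (fun j _ => hterm j i₀) ⟨j₀, Finset.mem_univ _, hterm₀⟩

theorem parallelotope_volume_asymptotics_general
    (r : ℕ)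
    (β : Module.Basis (Fin r) ℝ (Module.Dual ℝ (EuclideanSpace ℝ (Fin r))))
    (N : ℕ)
    (α : Fin N → Module.Dual ℝ (EuclideanSpace ℝ (Fin r)))
    (hα0 : ∀ j, α j ≠ 0)
    (hαβ : ∀ j, ∃ c : Fin r → ℝ, (∀ i, 0 ≤ c i) ∧ α j = ∑ i, c i • (β i : Module.Dual ℝ (EuclideanSpace ℝ (Fin r))))
    (m : Fin N → ℕ)
    (Ncoef : Fin r → ℝ) (hNcoef : ∀ i, 0 < Ncoef i)
    (h2ρ : (∑ j, (m j : ℝ) • α j) = ∑ i, Ncoef i • (β i : Module.Dual ℝ (EuclideanSpace ℝ (Fin r))))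
    (a : Fin r → ℝ) (ha : ∀ i, 0 < a i) :
    ∃ C > (0 : ℝ), ∃ C' ≥ (0 : ℝ), ∃ δm : ℝ, δm < ∑ i, Ncoef i * a i ∧
      ∀ t : ℝ, 1 ≤ t →
        |(∫ Y in {Y : EuclideanSpace ℝ (Fin r) | ∀ i, 0 ≤ β i Y ∧ β i Y ≤ t * a i},
              ∏ j, (Real.sinh (α j Y)) ^ (m j)) -
            C * Real.exp ((∑ i, Ncoef i * a i) * t)| ≤ C' * Real.exp (δm * t) := by
  have hc : ∀ j i, 0 ≤ β.repr (α j) i := fun j => by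
    obtain ⟨d, hd, hαd⟩ := hαβ j
    rwa [hαd, β.repr_sum_self]
  have hc0 : ∀ j, ⇑(β.repr (α j)) ≠ 0 := fun j h =>
    hα0 j (β.repr.map_eq_zero_iff.1 (DFunLike.coe_injective h))
  have h2ρ_repr : ∀ i, ∑ j, (m j : ℝ) * β.repr (α j) i = Ncoef i := fun i => by
    have h := congrFun (congrArg (fun φ => ⇑(β.repr φ)) h2ρ) i
    rw [β.repr_sum_self] at h
    simpa using h
  obtain ⟨vol, hvol, hI⟩ := exists_integral_prod_sinh_pow_parallelotope β volume α m
  set K := Fintype.piFinset fun j => Finset.range (m j + 1)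
  set w : (Fin N → ℕ) → ℝ := fun k => ∏ j, sinhPowCoeff (m j) (k j)
  set ξ : (Fin N → ℕ) → Fin r → ℝ := fun k i => ∑ j, (2 * k j - m j : ℝ) * β.repr (α j) i
  have hI' : ∀ t, ∫ Y in {Y : EuclideanSpace ℝ (Fin r) | ∀ i, 0 ≤ β i Y ∧ β i Y ≤ t * a i},
      ∏ j, sinh (α j Y) ^ m j = vol * ∑ k ∈ K, w k * expBoxIntegral (ξ k) fun i => t * a i :=
    fun t => hI _
  have hmK : m ∈ K := Fintype.mem_piFinset.2 fun j => Finset.self_mem_range_succ _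
  have hξm : ξ m = Ncoef := funext fun i => by
    simp only [ξ, ← h2ρ_repr]
    exact Finset.sum_congr rfl fun j _ => by ring
  have hlower : ∀ k ∈ K.erase m, ∑ i, max (ξ k i) 0 * a i < ∑ i, Ncoef i * a i :=
    fun k hk => by
      simpa only [h2ρ_repr] using
        sum_max_mul_lt_sum_mul hc hc0 ha (lt_of_mem_piFinset_range_erase hk)
  obtain ⟨C', hC', δm, hδm, hbound⟩ :=
    ((hasExpRateBelow_sum_expBoxIntegral_sub (w := w) hmK hNcoef ha hξm hlower).const_mul
      vol).exists_abs_le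
  have hwm : 0 < w m * ∏ i, (Ncoef i)⁻¹ := by
    simp only [w, sinhPowCoeff_self]
    exact mul_pos (by positivity) (Finset.prod_pos fun i _ => inv_pos.2 (hNcoef i))
  refine ⟨vol * (w m * ∏ i, (Ncoef i)⁻¹), mul_pos hvol hwm, C', hC', δm, hδm, fun t ht => ?_⟩
  convert hbound t (by linarith) using 2
  rw [hI']
  ring

/-- **Harish–Chandra volume of a parallelotope domain.**
Let `β₁, …, β_r` be a basis of the dual of `ℝ^r`, `α₁, …, α_N` nonzero linear forms that are
nonnegative combinations of the `β_i`, with multiplicities `m_j`, and `2ρ = Σ m_j α_j = Σ Nᵢ βᵢ`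
with `Nᵢ > 0`.  For `a_i > 0`, let `P = {Y : 0 ≤ βᵢ Y ≤ aᵢ}` and `δ_P = Σ Nᵢ aᵢ`.
Then `∫_{tP} ∏ sinh(α_j Y)^{m_j} dY = C e^{δ_P t} + O(e^{δ⁻ t})` for some `δ⁻ < δ_P`. -/
theorem parallelotope_volume_asymptotics
    (r : ℕ) (hr : 0 < r)
    (β : Module.Basis (Fin r) ℝ (Module.Dual ℝ (EuclideanSpace ℝ (Fin r))))
    (N : ℕ) (hN : 0 < N)
    (α : Fin N → Module.Dual ℝ (EuclideanSpace ℝ (Fin r)))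
    (hα0 : ∀ j, α j ≠ 0)
    (hαβ : ∀ j, ∃ c : Fin r → ℝ, (∀ i, 0 ≤ c i) ∧ α j = ∑ i, c i • (β i : Module.Dual ℝ (EuclideanSpace ℝ (Fin r))))
    (m : Fin N → ℕ) (hm : ∀ j, 0 < m j)
    (Ncoef : Fin r → ℝ) (hNcoef : ∀ i, 0 < Ncoef i)
    (h2ρ : (∑ j, (m j : ℝ) • α j) = ∑ i, Ncoef i • (β i : Module.Dual ℝ (EuclideanSpace ℝ (Fin r))))
    (a : Fin r → ℝ) (ha : ∀ i, 0 < a i) :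
    ∃ C > (0 : ℝ), ∃ C' ≥ (0 : ℝ), ∃ δm : ℝ, δm < ∑ i, Ncoef i * a i ∧
      ∀ t : ℝ, 1 ≤ t →
        |(∫ Y in {Y : EuclideanSpace ℝ (Fin r) | ∀ i, 0 ≤ β i Y ∧ β i Y ≤ t * a i},
              ∏ j, (Real.sinh (α j Y)) ^ (m j)) -
            C * Real.exp ((∑ i, Ncoef i * a i) * t)| ≤ C' * Real.exp (δm * t) :=
  parallelotope_volume_asymptotics_general r β N α hα0 hαβ m Ncoef hNcoef h2ρ a ha
end

section
/- There exists a constant c > 0 such that for all t ≥ 1 and all ε ∈ (0, 1], one has V(t + ε) ≤ e^{cε} V(t), where V(t) := ∫_{C ∩ {Y : ‖Y‖ ≤ t}} ∏_{j=1}^{N} sinh(α_j(Y))^{m_j} dY. In other words, t ↦ log V(t) is uniformly locally Lipschitz on [1, ∞). -/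
/-!
The cone is invariant under dilations, so with `L = 1 + ε / t` the truncated cone of radius
`t + ε` is `L` times the one of radius `t`, and the change of variables `Y ↦ L • Y` costs the
Jacobian `L ^ r ≤ e ^ (r ε)`. On the cone every `αⱼ` is nonnegative, and the elementary inequality
`sinh (L x) ≤ L e ^ ((L - 1) x) sinh x` bounds the dilated integrand by
`L ^ (∑ mⱼ) e ^ ((L - 1) 2ρ(Y))` times the original one, where `(L - 1) 2ρ(Y) ≤ ε ‖2ρ‖`
as soon as `‖Y‖ ≤ t`.
-/

open MeasureTheory Real Pointwise Metric Module

theorem Real.sinh_mul_le {L x : ℝ} (hL : 1 ≤ L) :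
    sinh (L * x) ≤ L * exp ((L - 1) * x) * sinh x := by
  -- Bernoulli's inequality for `exp (-2x) = 1 + s` gives `1 - exp (-2Lx) ≤ L (1 - exp (-2x))`.
  have hbern : 1 + L * (exp (-2 * x) - 1) ≤ exp (-2 * (L * x)) := by
    have := one_add_mul_self_le_rpow_one_add (s := exp (-2 * x) - 1)
      (by linarith [exp_pos (-2 * x)]) hL
    rw [add_sub_cancel, ← exp_mul] at this
    convert this using 1
    ring_nf
  have hsinh : ∀ y, sinh y = exp y * (1 - exp (-2 * y)) / 2 := fun y => by
    rw [sinh_eq, mul_sub, mul_one, ← exp_add]; ring_nf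
  have hexp : exp (L * x) = exp ((L - 1) * x) * exp x := by rw [← exp_add]; ring_nf
  rw [hsinh, hsinh x, hexp]
  have := mul_le_mul_of_nonneg_left (by linarith : 1 - exp (-2 * (L * x)) ≤ L * (1 - exp (-2 * x)))
    (mul_pos (exp_pos ((L - 1) * x)) (exp_pos x)).le
  linarith

theorem Finset.prod_sinh_mul_pow_le {ι : Type*} (s : Finset ι) (x : ι → ℝ) (m : ι → ℕ) {L : ℝ}
    (hL : 1 ≤ L) (hx : ∀ j ∈ s, 0 ≤ x j) :
    ∏ j ∈ s, sinh (L * x j) ^ m j ≤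
      L ^ (∑ j ∈ s, m j) * exp ((L - 1) * ∑ j ∈ s, m j * x j) * ∏ j ∈ s, sinh (x j) ^ m j := by
  calc ∏ j ∈ s, sinh (L * x j) ^ m j
      ≤ ∏ j ∈ s, (L * exp ((L - 1) * x j) * sinh (x j)) ^ m j := by
        refine Finset.prod_le_prod (fun j hj => ?_) (fun j hj => ?_)
        · exact pow_nonneg (sinh_nonneg_iff.mpr (mul_nonneg (by linarith) (hx j hj))) _
        · exact pow_le_pow_left₀ (sinh_nonneg_iff.mpr (mul_nonneg (by linarith) (hx j hj)))
            (sinh_mul_le hL) _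
    _ = _ := by
        simp only [mul_pow, Finset.prod_mul_distrib, Finset.prod_pow_eq_pow_sum, Finset.mul_sum,
          exp_sum, ← exp_nat_mul]
        congr 2
        exact Finset.prod_congr rfl fun j _ => by ring_nf

theorem one_add_div_pow_le_exp {ε t : ℝ} (hε : 0 ≤ ε) (ht : 1 ≤ t) (n : ℕ) :
    (1 + ε / t) ^ n ≤ exp (n * ε) := by
  have hεt : ε / t ≤ ε := div_le_self hε ht
  calc (1 + ε / t) ^ n ≤ exp ε ^ n := by
        gcongr
        linarith [add_one_le_exp ε]
    _ = exp (n * ε) := (exp_nat_mul ε n).symm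

section Dilation

variable {E : Type*} [NormedAddCommGroup E] [NormedSpace ℝ E] [MeasurableSpace E] [BorelSpace E]
  [FiniteDimensional ℝ E] (μ : Measure E) [μ.IsAddHaarMeasure]

theorem setIntegral_smul_set_le {F : E → ℝ} (hF : Continuous F) {S : Set E} (hS : IsCompact S)
    {c B : ℝ} (hc : 0 < c) (hle : ∀ Y ∈ S, F (c • Y) ≤ B * F Y) :
    ∫ Y in c • S, F Y ∂μ ≤ c ^ finrank ℝ E * B * ∫ Y in S, F Y ∂μ := by
  have hcd : (0 : ℝ) < c ^ finrank ℝ E := pow_pos hc _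
  have hdil : ∫ Y in c • S, F Y ∂μ = c ^ finrank ℝ E * ∫ Y in S, F (c • Y) ∂μ := by
    rw [Measure.setIntegral_comp_smul_of_pos μ F S hc, smul_eq_mul, mul_inv_cancel_left₀ hcd.ne']
  rw [hdil, mul_assoc, ← integral_const_mul B]
  refine mul_le_mul_of_nonneg_left (setIntegral_mono_on ?_ ?_ hS.measurableSet hle) hcd.le
  · exact (hF.comp (continuous_const_smul c)).continuousOn.integrableOn_compact hS
  · exact (continuous_const.mul hF).continuousOn.integrableOn_compact hS

end Dilation

theorem LinearMap.apply_le_norm_toContinuousLinearMap_mul {E : Type*} [NormedAddCommGroup E]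
    [NormedSpace ℝ E] [FiniteDimensional ℝ E] (φ : Dual ℝ E) (Y : E) :
    φ Y ≤ ‖LinearMap.toContinuousLinearMap φ‖ * ‖Y‖ :=
  (le_abs_self _).trans (by simpa using (LinearMap.toContinuousLinearMap φ).le_opNorm Y)

section TruncatedCone

variable {E ι κ : Type*} [NormedAddCommGroup E] [NormedSpace ℝ E]

def truncatedCone (β : ι → Dual ℝ E) (s : ℝ) : Set E :=
  {Y | (∀ i, 0 ≤ β i Y) ∧ ‖Y‖ ≤ s}

theorem smul_truncatedCone (β : ι → Dual ℝ E) (s : ℝ) {c : ℝ} (hc : 0 < c) :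
    c • truncatedCone β s = truncatedCone β (c * s) := by
  ext Y
  simp only [Set.mem_smul_set_iff_inv_smul_mem₀ hc.ne', truncatedCone, Set.mem_ofPred_eq,
    map_smul, smul_eq_mul, norm_smul, norm_inv, norm_of_nonneg hc.le,
    mul_nonneg_iff_of_pos_left (inv_pos.2 hc), inv_mul_le_iff₀ hc]

theorem isCompact_truncatedCone [FiniteDimensional ℝ E] (β : ι → Dual ℝ E) (s : ℝ) :
    IsCompact (truncatedCone β s) := by
  have hcone : IsClosed {Y : E | ∀ i, 0 ≤ β i Y} := by
    simp only [Set.ofPred_forall]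
    exact isClosed_iInter fun i =>
      isClosed_le continuous_const (β i).continuous_of_finiteDimensional
  have : truncatedCone β s = closedBall 0 s ∩ {Y | ∀ i, 0 ≤ β i Y} := by
    ext Y; simp [truncatedCone, and_comm]
  rw [this]
  exact (isCompact_closedBall 0 s).inter_right hcone

theorem apply_nonneg_of_mem_truncatedCone [Fintype ι] {β : ι → Dual ℝ E} {α : Dual ℝ E}
    (hα : ∃ c : ι → ℝ, (∀ i, 0 ≤ c i) ∧ α = ∑ i, c i • β i) {s : ℝ} {Y : E}
    (hY : Y ∈ truncatedCone β s) : 0 ≤ α Y := by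
  obtain ⟨c, hc, rfl⟩ := hα
  simp only [LinearMap.coe_sum, Finset.sum_apply, LinearMap.smul_apply, smul_eq_mul]
  exact Finset.sum_nonneg fun i _ => mul_nonneg (hc i) (hY.1 i)

theorem prod_sinh_pow_nonneg_of_mem_truncatedCone [Fintype ι] [Fintype κ] {β : ι → Dual ℝ E}
    {α : κ → Dual ℝ E} (hα : ∀ j, ∃ c : ι → ℝ, (∀ i, 0 ≤ c i) ∧ α j = ∑ i, c i • β i)
    (m : κ → ℕ) {s : ℝ} {Y : E} (hY : Y ∈ truncatedCone β s) : 0 ≤ ∏ j, sinh (α j Y) ^ m j :=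
  Finset.prod_nonneg fun j _ =>
    pow_nonneg (sinh_nonneg_iff.2 (apply_nonneg_of_mem_truncatedCone (hα j) hY)) _

theorem prod_sinh_pow_smul_le_of_mem_truncatedCone [FiniteDimensional ℝ E] [Fintype ι]
    [Fintype κ] {β : ι → Dual ℝ E} {α : κ → Dual ℝ E}
    (hα : ∀ j, ∃ c : ι → ℝ, (∀ i, 0 ≤ c i) ∧ α j = ∑ i, c i • β i) (m : κ → ℕ)
    {t ε : ℝ} (ht : 1 ≤ t) (hε : 0 ≤ ε) {Y : E} (hY : Y ∈ truncatedCone β t) :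
    ∏ j, sinh (α j ((1 + ε / t) • Y)) ^ m j ≤
      exp ((∑ j, m j + ‖LinearMap.toContinuousLinearMap (∑ j, (m j : ℝ) • α j)‖) * ε) *
        ∏ j, sinh (α j Y) ^ m j := by
  set K := ‖LinearMap.toContinuousLinearMap (∑ j, (m j : ℝ) • α j)‖
  have hρ : ∑ j, m j * α j Y ≤ K * t := by
    have := LinearMap.apply_le_norm_toContinuousLinearMap_mul (∑ j, (m j : ℝ) • α j) Y
    simp only [LinearMap.coe_sum, Finset.sum_apply, LinearMap.smul_apply, smul_eq_mul] at this
    exact this.trans (mul_le_mul_of_nonneg_left hY.2 (norm_nonneg _))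
  have hexp : (1 + ε / t - 1) * ∑ j, m j * α j Y ≤ K * ε := by
    rw [add_sub_cancel_left]
    calc ε / t * ∑ j, m j * α j Y ≤ ε / t * (K * t) := by gcongr
      _ = K * ε := by field_simp
  simp only [map_smul, smul_eq_mul]
  refine (Finset.univ.prod_sinh_mul_pow_le _ m (le_add_of_nonneg_right (by positivity))
    fun j _ => apply_nonneg_of_mem_truncatedCone (hα j) hY).trans ?_
  rw [add_mul, exp_add]
  gcongr
  · exact prod_sinh_pow_nonneg_of_mem_truncatedCone hα m hY
  · exact_mod_cast one_add_div_pow_le_exp hε ht _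

end TruncatedCone

theorem ball_volume_log_locally_lipschitz_general
    (r : ℕ)
    (β : Module.Basis (Fin r) ℝ (Module.Dual ℝ (EuclideanSpace ℝ (Fin r))))
    (N : ℕ)
    (α : Fin N → Module.Dual ℝ (EuclideanSpace ℝ (Fin r)))
    (hαβ : ∀ j, ∃ c : Fin r → ℝ, (∀ i, 0 ≤ c i) ∧ α j = ∑ i, c i • (β i : Module.Dual ℝ (EuclideanSpace ℝ (Fin r))))
    (m : Fin N → ℕ) :
    ∃ c > (0 : ℝ), ∀ t : ℝ, 1 ≤ t → ∀ ε : ℝ, 0 < ε → ε ≤ 1 →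
      (∫ Y in {Y : EuclideanSpace ℝ (Fin r) | (∀ i, 0 ≤ β i Y) ∧ ‖Y‖ ≤ t + ε},
          ∏ j, (Real.sinh (α j Y)) ^ (m j)) ≤
        Real.exp (c * ε) *
          ∫ Y in {Y : EuclideanSpace ℝ (Fin r) | (∀ i, 0 ≤ β i Y) ∧ ‖Y‖ ≤ t},
            ∏ j, (Real.sinh (α j Y)) ^ (m j) := by
  set M : ℕ := ∑ j, m j
  set K := ‖LinearMap.toContinuousLinearMap (∑ j, (m j : ℝ) • α j)‖
  refine ⟨r + M + K + 1, by positivity, fun t ht ε hε _ => ?_⟩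
  set F := fun Y : EuclideanSpace ℝ (Fin r) => ∏ j, sinh (α j Y) ^ m j
  have hF : Continuous F := continuous_finsetProd _ fun j _ =>
    (continuous_sinh.comp (α j).continuous_of_finiteDimensional).pow _
  have hV : 0 ≤ ∫ Y in truncatedCone β t, F Y :=
    setIntegral_nonneg (isCompact_truncatedCone β t).measurableSet fun _ hY =>
      prod_sinh_pow_nonneg_of_mem_truncatedCone hαβ m hY
  have hdil : truncatedCone β (t + ε) = (1 + ε / t) • truncatedCone β t := by
    rw [smul_truncatedCone β t (by positivity)]
    congr 1
    field_simp
  change ∫ Y in truncatedCone β (t + ε), F Y ≤ exp (_ * ε) * ∫ Y in truncatedCone β t, F Y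
  calc ∫ Y in truncatedCone β (t + ε), F Y
      ≤ (1 + ε / t) ^ r * exp ((M + K) * ε) * ∫ Y in truncatedCone β t, F Y := by
        rw [hdil]
        convert setIntegral_smul_set_le volume hF (isCompact_truncatedCone β t) (by positivity)
          fun Y hY => prod_sinh_pow_smul_le_of_mem_truncatedCone hαβ m ht hε.le hY
        exact finrank_euclideanSpace_fin.symm
    _ ≤ exp (r * ε) * exp ((M + K) * ε) * ∫ Y in truncatedCone β t, F Y := by
        gcongr
        exact one_add_div_pow_le_exp hε.le ht r
    _ ≤ exp ((r + M + K + 1) * ε) * ∫ Y in truncatedCone β t, F Y := by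
        rw [← exp_add]
        gcongr
        linarith

/-- **Uniform local Lipschitz property of the logarithm of the Harish–Chandra ball volume.**
With `V(t) = ∫_{C ∩ {‖Y‖ ≤ t}} ∏ sinh(α_j Y)^{m_j} dY` over the simplicial cone
`C = {Y : βᵢ Y ≥ 0}`, there is a constant `c > 0` such that for all `t ≥ 1` and `ε ∈ (0,1]`,
`V(t+ε) ≤ e^{cε} V(t)`. -/
theorem ball_volume_log_locally_lipschitz
    (r : ℕ) (hr : 0 < r)
    (β : Module.Basis (Fin r) ℝ (Module.Dual ℝ (EuclideanSpace ℝ (Fin r))))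
    (N : ℕ) (hN : 0 < N)
    (α : Fin N → Module.Dual ℝ (EuclideanSpace ℝ (Fin r)))
    (hα0 : ∀ j, α j ≠ 0)
    (hαβ : ∀ j, ∃ c : Fin r → ℝ, (∀ i, 0 ≤ c i) ∧ α j = ∑ i, c i • (β i : Module.Dual ℝ (EuclideanSpace ℝ (Fin r))))
    (m : Fin N → ℕ) (hm : ∀ j, 0 < m j)
    (Ncoef : Fin r → ℝ) (hNcoef : ∀ i, 0 < Ncoef i)
    (h2ρ : (∑ j, (m j : ℝ) • α j) = ∑ i, Ncoef i • (β i : Module.Dual ℝ (EuclideanSpace ℝ (Fin r)))) :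
    ∃ c > (0 : ℝ), ∀ t : ℝ, 1 ≤ t → ∀ ε : ℝ, 0 < ε → ε ≤ 1 →
      (∫ Y in {Y : EuclideanSpace ℝ (Fin r) | (∀ i, 0 ≤ β i Y) ∧ ‖Y‖ ≤ t + ε},
          ∏ j, (Real.sinh (α j Y)) ^ (m j)) ≤
        Real.exp (c * ε) *
          ∫ Y in {Y : EuclideanSpace ℝ (Fin r) | (∀ i, 0 ≤ β i Y) ∧ ‖Y‖ ≤ t},
            ∏ j, (Real.sinh (α j Y)) ^ (m j) :=
  ball_volume_log_locally_lipschitz_general r β N α hαβ m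
end

section
/- Assume in addition that the maximum of ρ over the closed unit ball of ℝ^r is attained at a point u with β_i(u) > 0 for every i, and set δ₀ := 2 max_{‖Y‖ ≤ 1} ρ(Y). Then there exists ε_D > 0 such that for every ε ∈ (0, ε_D) there are constants κ(ε) > 0 and C(ε) ≥ 0 with: for all t ≥ 1, ∫_{{Y ∈ C : ‖Y‖ ≤ t and dist(Y, ∂C) ≤ εt}} e^{2ρ(Y)} dY ≤ C(ε) t^r e^{(δ₀ − κ(ε)) t}, where ∂C denotes the topological frontier of C. (Consequently the volume of the set of almost-singular directions in the ball domain is exponentially smaller than e^{δ₀ t}.) -/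
/-!
Write `f = 2ρ`. Its maximizer `u` on the closed unit ball is unique by strict convexity, and it
lies in the interior of the cone `C`, at distance `εD > 0` from `∂C`. For `ε < εD` the compact set
of points of the unit ball within `ε` of `∂C` misses `u`, so `f ≤ δ₀ - κ` on it for some `κ > 0`.
Since `C` and `∂C` are invariant under positive dilations, rescaling by `t` gives
`f ≤ (δ₀ - κ) t` on the almost-singular part of the ball of radius `t`, whose volume is at most
`vol(B₁) tʳ`.
-/

open MeasureTheory Real
open Metric Set Module
open scoped Pointwise

section Cone

variable {E : Type*} [NormedAddCommGroup E] {C : Set E}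

variable (C) in
def almostSingularSet (ε t : ℝ) : Set E :=
  {Y | Y ∈ C ∧ ‖Y‖ ≤ t ∧ infDist Y (frontier C) ≤ ε * t}

theorem almostSingularSet_subset_closedBall (ε t : ℝ) :
    almostSingularSet C ε t ⊆ closedBall 0 t :=
  fun _ hY => mem_closedBall_zero_iff.2 hY.2.1

theorem isCompact_almostSingularSet [ProperSpace E] (hC : IsClosed C) (ε t : ℝ) :
    IsCompact (almostSingularSet C ε t) := by
  refine (isCompact_closedBall 0 t).of_isClosed_subset ?_
    (almostSingularSet_subset_closedBall ε t)
  exact hC.inter ((isClosed_le continuous_norm continuous_const).inter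
    (isClosed_le (continuous_infDist_pt _) continuous_const))

variable [NormedSpace ℝ E]

theorem smul_set_eq_of_smul_mem (hC : ∀ ⦃c : ℝ⦄, 0 < c → ∀ ⦃x⦄, x ∈ C → c • x ∈ C)
    {c : ℝ} (hc : 0 < c) : c • C = C := by
  refine (smul_set_subset_iff.2 fun x hx => hC hc hx).antisymm fun x hx => ?_
  exact ⟨c⁻¹ • x, hC (inv_pos.2 hc) hx, smul_inv_smul₀ hc.ne' x⟩

theorem smul_frontier_eq_of_smul_mem (hC : ∀ ⦃c : ℝ⦄, 0 < c → ∀ ⦃x⦄, x ∈ C → c • x ∈ C)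
    {c : ℝ} (hc : 0 < c) : c • frontier C = frontier C := by
  rw [← image_smul, (isHomeomorph_smul₀ hc.ne').image_frontier, image_smul,
    smul_set_eq_of_smul_mem hC hc]

theorem infDist_smul_frontier_of_smul_mem (hC : ∀ ⦃c : ℝ⦄, 0 < c → ∀ ⦃x⦄, x ∈ C → c • x ∈ C)
    {c : ℝ} (hc : 0 < c) (x : E) :
    infDist (c • x) (frontier C) = c * infDist x (frontier C) := by
  rw [← smul_frontier_eq_of_smul_mem hC hc, infDist_smul₀ hc.ne', norm_of_nonneg hc.le,
    smul_frontier_eq_of_smul_mem hC hc]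

theorem inv_smul_mem_almostSingularSet (hC : ∀ ⦃c : ℝ⦄, 0 < c → ∀ ⦃x⦄, x ∈ C → c • x ∈ C)
    {ε t : ℝ} (ht : 0 < t) {Y : E} (hY : Y ∈ almostSingularSet C ε t) :
    t⁻¹ • Y ∈ almostSingularSet C ε 1 := by
  obtain ⟨hYC, hYt, hYd⟩ := hY
  have ht' : 0 < t⁻¹ := inv_pos.2 ht
  refine ⟨hC ht' hYC, ?_, ?_⟩
  · rw [norm_smul, norm_of_nonneg ht'.le, inv_mul_le_one₀ ht]
    exact hYt
  · rw [infDist_smul_frontier_of_smul_mem hC ht', mul_one, inv_mul_le_iff₀ ht, mul_comm]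
    exact hYd

theorem map_le_mul_of_mem_almostSingularSet
    (hC : ∀ ⦃c : ℝ⦄, 0 < c → ∀ ⦃x⦄, x ∈ C → c • x ∈ C) (f : E →ₗ[ℝ] ℝ) {ε M : ℝ}
    (hM : ∀ y ∈ almostSingularSet C ε 1, f y ≤ M) {t : ℝ} (ht : 0 < t) {Y : E}
    (hY : Y ∈ almostSingularSet C ε t) : f Y ≤ M * t := by
  have h := hM _ (inv_smul_mem_almostSingularSet hC ht hY)
  rwa [map_smul, smul_eq_mul, inv_mul_le_iff₀ ht, mul_comm] at h

end Cone

section HalfspaceIntersection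

variable {E ι : Type*} [NormedAddCommGroup E] [NormedSpace ℝ E] (β : ι → Dual ℝ E)

theorem setOf_forall_nonneg_ne_univ {i : ι} (hi : β i ≠ 0) : {Z : E | ∀ i, 0 ≤ β i Z} ≠ univ := by
  obtain ⟨w, hw⟩ := DFunLike.ne_iff.1 hi
  intro h_univ
  have hw' := (h_univ ▸ mem_univ (-(β i w) • w) : _ ∈ {Z : E | ∀ i, 0 ≤ β i Z}) i
  rw [map_smul, smul_eq_mul] at hw'
  exact (mul_self_pos.2 hw).not_ge (by simpa using hw')

variable [FiniteDimensional ℝ E]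

theorem isClosed_setOf_forall_nonneg : IsClosed {Z : E | ∀ i, 0 ≤ β i Z} := by
  simpa only [ofPred_forall] using isClosed_iInter fun i =>
    isClosed_le continuous_const (β i).continuous_of_finiteDimensional

theorem mem_interior_setOf_forall_nonneg [Finite ι] {u : E} (hu : ∀ i, 0 < β i u) :
    u ∈ interior {Z : E | ∀ i, 0 ≤ β i Z} := by
  refine interior_maximal (t := {Z | ∀ i, 0 < β i Z}) (fun Z hZ i => (hZ i).le) ?_ hu
  simpa only [ofPred_forall] using isOpen_iInter_of_finite fun i =>
    isOpen_lt continuous_const (β i).continuous_of_finiteDimensional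

end HalfspaceIntersection

theorem eq_of_map_eq_of_forall_le_on_closedBall {E : Type*} [NormedAddCommGroup E]
    [NormedSpace ℝ E] [StrictConvexSpace ℝ E] (f : E →ₗ[ℝ] ℝ) {u y : E}
    (hu : u ∈ closedBall 0 1) (hmax : ∀ z ∈ closedBall (0 : E) 1, f z ≤ f u) (hfu : 0 < f u)
    (hy : y ∈ closedBall 0 1) (hfy : f y = f u) : y = u := by
  by_contra hne
  set z : E := (1 / 2 : ℝ) • y + (1 / 2 : ℝ) • u
  have hz : ‖z‖ < 1 :=
    mem_ball_zero_iff.1 (combo_mem_ball_of_ne hy hu hne one_half_pos one_half_pos (by norm_num))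
  have hfz : f z = f u := by
    simp only [z, map_add, map_smul, smul_eq_mul, hfy]
    ring
  have hz0 : 0 < ‖z‖ := norm_pos_iff.2 fun h => by simp [h, hfu.ne] at hfz
  have hscaled := hmax (‖z‖⁻¹ • z) (by
    rw [mem_closedBall_zero_iff, norm_smul, norm_inv, norm_norm, inv_mul_cancel₀ hz0.ne'])
  rw [map_smul, smul_eq_mul, hfz, inv_mul_le_iff₀ hz0] at hscaled
  nlinarith

theorem exists_pos_forall_map_le_sub {E : Type*} [NormedAddCommGroup E] [NormedSpace ℝ E]
    [StrictConvexSpace ℝ E] (f : E →ₗ[ℝ] ℝ) (hf : Continuous f) {K : Set E} (hK : IsCompact K)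
    (hK_ball : K ⊆ closedBall 0 1) {u : E} (huK : u ∉ K) (hu : u ∈ closedBall 0 1)
    (hmax : ∀ z ∈ closedBall (0 : E) 1, f z ≤ f u) (hfu : 0 < f u) :
    ∃ κ > 0, ∀ y ∈ K, f y ≤ f u - κ := by
  have hlt : ∀ y ∈ K, 0 < f u - f y := fun y hy => sub_pos.2 <|
    (hmax y (hK_ball hy)).lt_of_ne fun hfy => huK <|
      eq_of_map_eq_of_forall_le_on_closedBall f hu hmax hfu (hK_ball hy) hfy ▸ hy
  obtain ⟨κ, hκ, hgap⟩ := hK.exists_forall_le' (f := fun y => f u - f y)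
    (continuous_const.sub hf).continuousOn hlt
  exact ⟨κ, hκ, fun y hy => by linarith [hgap y hy]⟩

theorem setIntegral_le_of_subset_closedBall {E : Type*} [NormedAddCommGroup E]
    [NormedSpace ℝ E] [FiniteDimensional ℝ E] [MeasurableSpace E] [BorelSpace E]
    (μ : Measure E) [μ.IsAddHaarMeasure] {S : Set E} {t B : ℝ} (ht : 0 ≤ t)
    (hS : S ⊆ closedBall 0 t) {g : E → ℝ} (hB : 0 ≤ B) (hg : ∀ Y ∈ S, ‖g Y‖ ≤ B) :
    ∫ Y in S, g Y ∂μ ≤ μ.real (closedBall 0 1) * t ^ finrank ℝ E * B := by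
  have hball : μ.real (closedBall 0 t) = t ^ finrank ℝ E * μ.real (closedBall 0 1) := by
    rw [measureReal_def, Measure.addHaar_closedBall' μ 0 ht, ENNReal.toReal_mul,
      ENNReal.toReal_ofReal (by positivity), measureReal_def]
  have hS_real : μ.real S ≤ μ.real (closedBall 0 t) :=
    measureReal_mono hS measure_closedBall_lt_top.ne
  calc ∫ Y in S, g Y ∂μ ≤ B * μ.real S :=
        (le_abs_self _).trans
          (norm_setIntegral_le_of_norm_le_const ((measure_mono hS).trans_lt
            measure_closedBall_lt_top) hg)
    _ ≤ B * μ.real (closedBall 0 t) := by gcongr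
    _ = μ.real (closedBall 0 1) * t ^ finrank ℝ E * B := by rw [hball]; ring

theorem almost_singular_volume_estimate_general
    (r : ℕ) (hr : 0 < r)
    (β : Module.Basis (Fin r) ℝ (Module.Dual ℝ (EuclideanSpace ℝ (Fin r))))
    (N : ℕ)
    (α : Fin N → Module.Dual ℝ (EuclideanSpace ℝ (Fin r)))
    (m : Fin N → ℕ)
    (Ncoef : Fin r → ℝ) (hNcoef : ∀ i, 0 < Ncoef i)
    (h2ρ : (∑ j, (m j : ℝ) • α j) = ∑ i, Ncoef i • (β i : Module.Dual ℝ (EuclideanSpace ℝ (Fin r))))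
    (u : EuclideanSpace ℝ (Fin r)) (hu : ‖u‖ ≤ 1) (hureg : ∀ i, 0 < β i u)
    (humax : ∀ Y : EuclideanSpace ℝ (Fin r), ‖Y‖ ≤ 1 →
      (∑ j, (m j : ℝ) * α j Y) ≤ ∑ j, (m j : ℝ) * α j u) :
    ∃ εD > (0 : ℝ), ∀ ε : ℝ, 0 < ε → ε < εD →
      ∃ κ > (0 : ℝ), ∃ C ≥ (0 : ℝ), ∀ t : ℝ, 1 ≤ t →
        (∫ Y in {Y : EuclideanSpace ℝ (Fin r) | (∀ i, 0 ≤ β i Y) ∧ ‖Y‖ ≤ t ∧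
              Metric.infDist Y (frontier {Z : EuclideanSpace ℝ (Fin r) | ∀ i, 0 ≤ β i Z}) ≤ ε * t},
            Real.exp (∑ j, (m j : ℝ) * α j Y)) ≤
          C * t ^ r * Real.exp (((∑ j, (m j : ℝ) * α j u) - κ) * t) := by
  set f : Dual ℝ (EuclideanSpace ℝ (Fin r)) := ∑ j, (m j : ℝ) • α j
  have hf (Y : EuclideanSpace ℝ (Fin r)) : ∑ j, (m j : ℝ) * α j Y = f Y := by simp [f]
  simp only [hf] at humax ⊢
  have hfu : 0 < f u := by
    have : Nonempty (Fin r) := Fin.pos_iff_nonempty.1 hr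
    simp only [f, h2ρ, LinearMap.sum_apply, LinearMap.smul_apply, smul_eq_mul]
    exact Finset.sum_pos (fun i _ => mul_pos (hNcoef i) (hureg i)) Finset.univ_nonempty
  set C : Set (EuclideanSpace ℝ (Fin r)) := {Z | ∀ i, 0 ≤ β i Z}
  have hC : ∀ ⦃c : ℝ⦄, 0 < c → ∀ ⦃x⦄, x ∈ C → c • x ∈ C := fun c hc x hx i => by
    simpa only [map_smul, smul_eq_mul] using mul_nonneg hc.le (hx i)
  have hFne : (frontier C).Nonempty := nonempty_frontier_iff.2
    ⟨⟨0, fun i => by simp⟩, setOf_forall_nonneg_ne_univ β (β.ne_zero ⟨0, hr⟩)⟩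
  refine ⟨infDist u (frontier C), (isClosed_frontier.notMem_iff_infDist_pos hFne).1
    fun hu_fr => hu_fr.2 (mem_interior_setOf_forall_nonneg β hureg), fun ε _ hεD => ?_⟩
  obtain ⟨κ, hκ, hgap⟩ := exists_pos_forall_map_le_sub f f.continuous_of_finiteDimensional
    (isCompact_almostSingularSet (isClosed_setOf_forall_nonneg β) ε 1)
    (almostSingularSet_subset_closedBall ε 1) (fun huK => hεD.not_ge (by simpa using huK.2.2))
    (mem_closedBall_zero_iff.2 hu) (fun z hz => humax z (mem_closedBall_zero_iff.1 hz)) hfu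
  refine ⟨κ, hκ, volume.real (closedBall (0 : EuclideanSpace ℝ (Fin r)) 1), measureReal_nonneg,
    fun t ht => ?_⟩
  have ht0 : 0 < t := one_pos.trans_le ht
  refine (setIntegral_le_of_subset_closedBall volume ht0.le
    (almostSingularSet_subset_closedBall ε t) (exp_nonneg _) fun Y hY => ?_).trans_eq
    (by rw [finrank_euclideanSpace_fin])
  rw [norm_of_nonneg (exp_nonneg _), exp_le_exp]
  exact map_le_mul_of_mem_almostSingularSet hC f hgap ht0 hY

/-- **Volume estimate for almost-singular Cartan projections.**
With `2ρ = Σ m_j α_j` maximized on the closed unit ball at a regular point `u`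
(`βᵢ u > 0` for all `i`), and `δ₀ = 2 max_{‖Y‖≤1} ρ(Y) = (2ρ)(u)`, there is `ε_D > 0` such that
for every `ε ∈ (0, ε_D)` there are `κ(ε) > 0` and `C(ε) ≥ 0` with
`∫_{{Y ∈ C : ‖Y‖ ≤ t, dist(Y,∂C) ≤ εt}} e^{2ρ(Y)} dY ≤ C(ε) t^r e^{(δ₀ - κ(ε)) t}` for all `t ≥ 1`. -/
theorem almost_singular_volume_estimate
    (r : ℕ) (hr : 0 < r)
    (β : Module.Basis (Fin r) ℝ (Module.Dual ℝ (EuclideanSpace ℝ (Fin r))))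
    (N : ℕ) (hN : 0 < N)
    (α : Fin N → Module.Dual ℝ (EuclideanSpace ℝ (Fin r)))
    (hα0 : ∀ j, α j ≠ 0)
    (hαβ : ∀ j, ∃ c : Fin r → ℝ, (∀ i, 0 ≤ c i) ∧ α j = ∑ i, c i • (β i : Module.Dual ℝ (EuclideanSpace ℝ (Fin r))))
    (m : Fin N → ℕ) (hm : ∀ j, 0 < m j)
    (Ncoef : Fin r → ℝ) (hNcoef : ∀ i, 0 < Ncoef i)
    (h2ρ : (∑ j, (m j : ℝ) • α j) = ∑ i, Ncoef i • (β i : Module.Dual ℝ (EuclideanSpace ℝ (Fin r))))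
    (u : EuclideanSpace ℝ (Fin r)) (hu : ‖u‖ ≤ 1) (hureg : ∀ i, 0 < β i u)
    (humax : ∀ Y : EuclideanSpace ℝ (Fin r), ‖Y‖ ≤ 1 →
      (∑ j, (m j : ℝ) * α j Y) ≤ ∑ j, (m j : ℝ) * α j u) :
    ∃ εD > (0 : ℝ), ∀ ε : ℝ, 0 < ε → ε < εD →
      ∃ κ > (0 : ℝ), ∃ C ≥ (0 : ℝ), ∀ t : ℝ, 1 ≤ t →
        (∫ Y in {Y : EuclideanSpace ℝ (Fin r) | (∀ i, 0 ≤ β i Y) ∧ ‖Y‖ ≤ t ∧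
              Metric.infDist Y (frontier {Z : EuclideanSpace ℝ (Fin r) | ∀ i, 0 ≤ β i Z}) ≤ ε * t},
            Real.exp (∑ j, (m j : ℝ) * α j Y)) ≤
          C * t ^ r * Real.exp (((∑ j, (m j : ℝ) * α j u) - κ) * t) :=
  almost_singular_volume_estimate_general r hr β N α m Ncoef hNcoef h2ρ u hu hureg humax
end

section
/- Let T : V → V be a self-adjoint linear map, let v⁺ ∈ V be a unit eigenvector of T with eigenvalue λ₁ > 0, and suppose there is λ₂ ≥ 0 with ‖T w‖ ≤ λ₂ ‖w‖ for every w orthogonal to v⁺. Let 0 < ε ≤ 1 and assume the eigenvalue gap λ₂ / λ₁ < ε². Then for every nonzero v ∈ V with cos∠(v, v⁺) ≥ ε, the vector T v is nonzero and sin∠(T v, v⁺) < ε. (That is, T maps the complement of the ε-neighbourhood of the hyperplane (v⁺)^⊥ in projective space into the ball of radius ε around the line ℝ v⁺.) -/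
open scoped RealInnerProductSpace

/-!
Split `v = w + ⟪v, v⁺⟫ • v⁺` with `w ⊥ v⁺`. Self-adjointness keeps `T w ⊥ v⁺`, so
`T v = T w + λ₁ ⟪v, v⁺⟫ • v⁺` is again such a splitting and the sine of `∠(T v, v⁺)` is
`‖T w‖ / ‖T v‖`. The perpendicular part shrinks by at least `λ₂` while the parallel part grows
by `λ₁`: `‖T w‖ ≤ λ₂ ‖v‖ < ε² λ₁ ‖v‖ ≤ ε λ₁ |⟪v, v⁺⟫| ≤ ε ‖T v‖`.
-/

section UnitVector

variable {V : Type*} [NormedAddCommGroup V] [InnerProductSpace ℝ V] {e : V}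

lemma inner_sub_inner_smul_self (he : ‖e‖ = 1) (u : V) : ⟪u - ⟪u, e⟫ • e, e⟫ = 0 := by
  rw [inner_sub_left, real_inner_smul_left, real_inner_self_eq_norm_sq, he]
  ring

lemma norm_sq_eq_norm_sub_inner_smul_sq_add_inner_sq (he : ‖e‖ = 1) (u : V) :
    ‖u‖ ^ 2 = ‖u - ⟪u, e⟫ • e‖ ^ 2 + ⟪u, e⟫ ^ 2 := by
  have hsplit : u = (u - ⟪u, e⟫ • e) + ⟪u, e⟫ • e := (sub_add_cancel _ _).symm
  conv_lhs => rw [hsplit]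
  rw [norm_add_sq_real, real_inner_smul_right, inner_sub_inner_smul_self he, norm_smul, he,
    Real.norm_eq_abs, mul_one, sq_abs]
  ring

lemma norm_sub_inner_smul_le (he : ‖e‖ = 1) (u : V) : ‖u - ⟪u, e⟫ • e‖ ≤ ‖u‖ :=
  le_of_pow_le_pow_left₀ two_ne_zero (norm_nonneg u) <| by
    rw [norm_sq_eq_norm_sub_inner_smul_sq_add_inner_sq he u]
    exact le_add_of_nonneg_right (sq_nonneg _)

lemma sqrt_one_sub_cos_sq_eq (he : ‖e‖ = 1) {u : V} (hu : u ≠ 0) :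
    Real.sqrt (1 - (|⟪u, e⟫| / (‖u‖ * ‖e‖)) ^ 2) = ‖u - ⟪u, e⟫ • e‖ / ‖u‖ := by
  have hu' : 0 < ‖u‖ := norm_pos_iff.mpr hu
  rw [← Real.sqrt_sq (by positivity : 0 ≤ ‖u - ⟪u, e⟫ • e‖ / ‖u‖)]
  congr 1
  rw [he, mul_one, div_pow, div_pow, sq_abs, one_sub_div (by positivity),
    norm_sq_eq_norm_sub_inner_smul_sq_add_inner_sq he u, add_sub_cancel_right]

end UnitVector

section Eigenvector

variable {V : Type*} [NormedAddCommGroup V] [InnerProductSpace ℝ V] {T : V →ₗ[ℝ] V} {e : V}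
  {l : ℝ}

lemma LinearMap.IsSymmetric.inner_map_eigenvector (hT : T.IsSymmetric) (hTe : T e = l • e)
    (u : V) : ⟪T u, e⟫ = l * ⟪u, e⟫ := by
  rw [hT, hTe, real_inner_smul_right]

lemma LinearMap.IsSymmetric.map_sub_inner_smul_eigenvector (hT : T.IsSymmetric)
    (hTe : T e = l • e) (u : V) : T (u - ⟪u, e⟫ • e) = T u - ⟪T u, e⟫ • e := by
  rw [map_sub, map_smul, hTe, smul_smul, hT.inner_map_eigenvector hTe, mul_comm]

lemma LinearMap.IsSymmetric.norm_sub_inner_smul_map_lt (hT : T.IsSymmetric) (he : ‖e‖ = 1)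
    {l₁ l₂ ε : ℝ} (hl₁ : 0 < l₁) (hTe : T e = l₁ • e) (hl₂ : 0 ≤ l₂)
    (hperp : ∀ w : V, ⟪w, e⟫ = 0 → ‖T w‖ ≤ l₂ * ‖w‖) (hε : 0 ≤ ε) (hgap : l₂ < ε ^ 2 * l₁)
    {v : V} (hv : v ≠ 0) (hcos : ε * ‖v‖ ≤ |⟪v, e⟫|) :
    ‖T v - ⟪T v, e⟫ • e‖ < ε * |⟪T v, e⟫| :=
  calc ‖T v - ⟪T v, e⟫ • e‖ = ‖T (v - ⟪v, e⟫ • e)‖ := by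
        rw [hT.map_sub_inner_smul_eigenvector hTe]
    _ ≤ l₂ * ‖v - ⟪v, e⟫ • e‖ := hperp _ (inner_sub_inner_smul_self he v)
    _ ≤ l₂ * ‖v‖ := mul_le_mul_of_nonneg_left (norm_sub_inner_smul_le he v) hl₂
    _ < ε ^ 2 * l₁ * ‖v‖ := mul_lt_mul_of_pos_right hgap (norm_pos_iff.mpr hv)
    _ = ε * l₁ * (ε * ‖v‖) := by ring
    _ ≤ ε * l₁ * |⟪v, e⟫| := by gcongr
    _ = ε * |⟪T v, e⟫| := by
        rw [hT.inner_map_eigenvector hTe, abs_mul, abs_of_pos hl₁, mul_assoc]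

end Eigenvector

theorem symmetric_gap_contraction_general
    {V : Type*} [NormedAddCommGroup V] [InnerProductSpace ℝ V]
    (T : V →ₗ[ℝ] V) (hT : ∀ x y : V, ⟪T x, y⟫ = ⟪x, T y⟫)
    (vp : V) (hvp : ‖vp‖ = 1)
    (l₁ l₂ : ℝ) (hl₁ : 0 < l₁) (hTvp : T vp = l₁ • vp)
    (hl₂ : 0 ≤ l₂) (hl₂' : ∀ w : V, ⟪w, vp⟫ = 0 → ‖T w‖ ≤ l₂ * ‖w‖)
    (ε : ℝ) (hε : 0 < ε) (hgap : l₂ / l₁ < ε ^ 2) :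
    ∀ v : V, v ≠ 0 → ε ≤ |⟪v, vp⟫| / (‖v‖ * ‖vp‖) →
      T v ≠ 0 ∧ Real.sqrt (1 - (|⟪T v, vp⟫| / (‖T v‖ * ‖vp‖)) ^ 2) < ε := by
  intro v hv hcos
  rw [hvp, mul_one, le_div_iff₀ (norm_pos_iff.mpr hv)] at hcos
  have hlt : ‖T v - ⟪T v, vp⟫ • vp‖ < ε * |⟪T v, vp⟫| :=
    LinearMap.IsSymmetric.norm_sub_inner_smul_map_lt hT hvp hl₁ hTvp hl₂ hl₂' hε.le
      ((div_lt_iff₀ hl₁).mp hgap) hv hcos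
  have hTv : T v ≠ 0 := by
    intro h
    simp [h] at hlt
  refine ⟨hTv, ?_⟩
  rw [sqrt_one_sub_cos_sq_eq hvp hTv, div_lt_iff₀ (norm_pos_iff.mpr hTv)]
  calc ‖T v - ⟪T v, vp⟫ • vp‖ < ε * |⟪T v, vp⟫| := hlt
    _ ≤ ε * ‖T v‖ := by
        gcongr
        simpa [hvp] using abs_real_inner_le_norm (T v) vp

/-- **Dynamical lemma for symmetric maps with an eigenvalue gap.**
If `T` is self-adjoint, `v⁺` is a unit eigenvector with eigenvalue `λ₁ > 0`, `‖T w‖ ≤ λ₂ ‖w‖`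
on `(v⁺)^⊥`, and the gap satisfies `λ₂/λ₁ < ε²` with `0 < ε ≤ 1`, then `T` maps every nonzero
`v` with `cos∠(v, v⁺) ≥ ε` to a nonzero vector with `sin∠(T v, v⁺) < ε`. -/
theorem symmetric_gap_contraction
    {V : Type*} [NormedAddCommGroup V] [InnerProductSpace ℝ V] [FiniteDimensional ℝ V]
    (T : V →ₗ[ℝ] V) (hT : ∀ x y : V, ⟪T x, y⟫ = ⟪x, T y⟫)
    (vp : V) (hvp : ‖vp‖ = 1)
    (l₁ l₂ : ℝ) (hl₁ : 0 < l₁) (hTvp : T vp = l₁ • vp)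
    (hl₂ : 0 ≤ l₂) (hl₂' : ∀ w : V, ⟪w, vp⟫ = 0 → ‖T w‖ ≤ l₂ * ‖w‖)
    (ε : ℝ) (hε : 0 < ε) (hε1 : ε ≤ 1) (hgap : l₂ / l₁ < ε ^ 2) :
    ∀ v : V, v ≠ 0 → ε ≤ |⟪v, vp⟫| / (‖v‖ * ‖vp‖) →
      T v ≠ 0 ∧ Real.sqrt (1 - (|⟪T v, vp⟫| / (‖T v‖ * ‖vp‖)) ^ 2) < ε :=
  symmetric_gap_contraction_general T hT vp hvp l₁ l₂ hl₁ hTvp hl₂ hl₂' ε hε hgap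
end

section
/- Let Γ be a subgroup of G and let V ⊆ G be a measurable set such that (V · V⁻¹) ∩ Γ ⊆ {1}. Then for every subset S ⊆ G and every finite subset F of Γ ∩ S, one has (card F) · μ(V) ≤ μ(S · V). In particular, if μ(V) > 0 and μ(S · V) < ∞ then Γ ∩ S is finite with card(Γ ∩ S) ≤ μ(S · V) / μ(V). -/
/-!
The translates `γ • V`, `γ ∈ Γ`, are pairwise disjoint: a point of `γ₁ • V ∩ γ₂ • V` puts
`γ₂⁻¹ γ₁` in `(V · V⁻¹) ∩ Γ ⊆ {1}`. For finite `F ⊆ Γ ∩ S` they all have measure `μ V` and lie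
in `S · V`, which gives `card F · μ V ≤ μ (S · V)`; this bound on all finite subsets forces
`Γ ∩ S` to be finite.
-/

open MeasureTheory
open scoped Pointwise ENNReal

section

variable {G : Type*} [Group G]

theorem inv_mul_mem_mul_inv_of_not_disjoint_smul {a b : G} {V : Set G}
    (h : ¬Disjoint (a • V) (b • V)) : b⁻¹ * a ∈ V * V⁻¹ := by
  obtain ⟨_, ⟨v, hv, rfl⟩, ⟨w, hw, hwv⟩⟩ := Set.not_disjoint_iff.1 h
  have hba : b⁻¹ * a = w * v⁻¹ := by
    simp only [smul_eq_mul] at hwv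
    rw [inv_mul_eq_iff_eq_mul, ← mul_assoc, hwv, mul_inv_cancel_right]
  exact hba ▸ Set.mul_mem_mul hw (Set.inv_mem_inv.2 hv)

theorem Subgroup.pairwiseDisjoint_smul_of_mul_inv_inter_subset_one (Γ : Subgroup G)
    {V : Set G} (hVΓ : (V * V⁻¹) ∩ (Γ : Set G) ⊆ {1}) :
    (Γ : Set G).PairwiseDisjoint (· • V) := by
  intro a ha b hb hab
  by_contra h
  have hba : b⁻¹ * a = 1 :=
    hVΓ ⟨inv_mul_mem_mul_inv_of_not_disjoint_smul h, Γ.mul_mem (Γ.inv_mem hb) ha⟩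
  exact hab (inv_mul_eq_one.1 hba).symm

theorem Finset.card_mul_measure_eq_measure_mul [MeasurableSpace G] [MeasurableMul G]
    (μ : Measure G) [μ.IsMulLeftInvariant] {V : Set G} (hV : MeasurableSet V) (F : Finset G)
    (hF : (F : Set G).PairwiseDisjoint (· • V)) :
    (F.card : ℝ≥0∞) * μ V = μ ((F : Set G) * V) := by
  have hunion : (F : Set G) * V = ⋃ a ∈ F, a • V := Set.iUnion_smul_left_image.symm
  rw [hunion, measure_biUnion_finset hF fun a _ ↦ hV.const_smul a]
  simp only [measure_smul, Finset.sum_const, nsmul_eq_mul]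

end

theorem Set.Finite.of_forall_finset_card_mul_le {α : Type*} {s : Set α} {a b : ℝ≥0∞}
    (ha : a ≠ 0) (hb : b ≠ ⊤) (h : ∀ F : Finset α, (F : Set α) ⊆ s → F.card * a ≤ b) :
    s.Finite := by
  by_contra hs
  obtain ⟨n, hn⟩ := ENNReal.exists_nat_gt (ENNReal.div_lt_top hb ha).ne
  obtain ⟨F, hFs, rfl⟩ := Set.Infinite.exists_subset_card_eq hs n
  exact hn.not_ge ((ENNReal.le_div_iff_mul_le (.inl ha) (.inr hb)).2 (h F hFs))

/-- **Volume bound on lattice points in a region.**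
Let `μ` be a left-invariant Borel measure on a topological group `G`, `Γ ≤ G` a subgroup, and
`V ⊆ G` a measurable set with `(V · V⁻¹) ∩ Γ ⊆ {1}`.  Then for every `S ⊆ G` and every finite
`F ⊆ Γ ∩ S` one has `(card F) μ(V) ≤ μ(S · V)`; in particular if `μ(V) > 0` and `μ(S·V) < ∞`
then `Γ ∩ S` is finite of cardinality at most `μ(S·V)/μ(V)`. -/
theorem lattice_point_volume_bound
    {G : Type*} [Group G] [TopologicalSpace G] [IsTopologicalGroup G]
    [MeasurableSpace G] [BorelSpace G]
    (μ : Measure G) [μ.IsMulLeftInvariant]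
    (Γ : Subgroup G) (V : Set G) (hV : MeasurableSet V)
    (hVΓ : (V * V⁻¹) ∩ (Γ : Set G) ⊆ {1}) (S : Set G) :
    (∀ F : Finset G, (F : Set G) ⊆ (Γ : Set G) ∩ S →
        (F.card : ENNReal) * μ V ≤ μ (S * V)) ∧
      (0 < μ V → μ (S * V) < ⊤ →
        ((Γ : Set G) ∩ S).Finite ∧
          ((((Γ : Set G) ∩ S).ncard : ENNReal) ≤ μ (S * V) / μ V)) := by
  have hdisj := Γ.pairwiseDisjoint_smul_of_mul_inv_inter_subset_one hVΓ
  have hbound : ∀ F : Finset G, (F : Set G) ⊆ (Γ : Set G) ∩ S →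
      (F.card : ENNReal) * μ V ≤ μ (S * V) := fun F hF ↦
    calc (F.card : ENNReal) * μ V
        = μ ((F : Set G) * V) :=
          F.card_mul_measure_eq_measure_mul μ hV (hdisj.subset (hF.trans Set.inter_subset_left))
      _ ≤ μ (S * V) := measure_mono (Set.mul_subset_mul_right (hF.trans Set.inter_subset_right))
  refine ⟨hbound, fun hVpos hSV ↦ ?_⟩
  have hfin := Set.Finite.of_forall_finset_card_mul_le hVpos.ne' hSV.ne hbound
  refine ⟨hfin, ?_⟩
  rw [ENNReal.le_div_iff_mul_le (.inl hVpos.ne') (.inr hSV.ne), Set.ncard_eq_toFinset_card _ hfin]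
  exact hbound _ (by simp)
end

section
/- Let G be a group, K a subgroup of G, a ∈ G and k ∈ K. If a⁻ⁿ (a k)ⁿ ∈ K for every integer n ∈ ℤ, then a⁻ⁿ k aⁿ ∈ K for every integer n ∈ ℤ. -/
theorem telescoping_conjugation_general
    {G : Type*} [Group G] (K : Subgroup G) (a k : G)
    (h : ∀ n : ℤ, a ^ (-n) * (a * k) ^ n ∈ K) :
    ∀ n : ℤ, a ^ (-n) * k * a ^ n ∈ K := by
  intro n
  have telescope : a ^ (-n) * k * a ^ n
      = (a ^ (-(n + 1)) * (a * k) ^ (n + 1)) * (a ^ (-n) * (a * k) ^ n)⁻¹ := by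
    group
  rw [telescope]
  exact mul_mem (h (n + 1)) (inv_mem (h n))

/-- **Telescoping conjugation lemma.**
In a group `G` with subgroup `K`, if `a ∈ G`, `k ∈ K` and `a⁻ⁿ (a k)ⁿ ∈ K` for every `n ∈ ℤ`,
then `a⁻ⁿ k aⁿ ∈ K` for every `n ∈ ℤ`. -/
theorem telescoping_conjugation
    {G : Type*} [Group G] (K : Subgroup G) (a k : G) (hk : k ∈ K)
    (h : ∀ n : ℤ, a ^ (-n) * (a * k) ^ n ∈ K) :
    ∀ n : ℤ, a ^ (-n) * k * a ^ n ∈ K :=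
  telescoping_conjugation_general K a k h
end
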